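/- There exists a constant C > 0 such that for all real x and all t with 0 < t ≤ 1, |∫_{ℝ} e^{i x ξ + i t ξ√(1+ξ²)} dξ| ≤ C t^{-1/2}. -/

import Mathlib

/-!
Write `φ(ξ) = xξ + tξ√(1+ξ²)`. As `φ` is odd, the integral over `[-R, R]` is `2 Re ∫₀ᴿ e^{iφ}`.
On `[0, 1]` the integrand has modulus one, and on `[1, ∞)` one has `φ'' ≥ t`, so van der Corput's
second-derivative test bounds `∫₁ᴿ e^{iφ}` by `8 / √t` uniformly in `R`. The limit `R → ∞` exists by
the first-derivative test, since `φ'` is increasing and tends to `∞`.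
-/

open Filter Set MeasureTheory
open scoped ComplexConjugate

theorem mul_sub_le_sub_of_le_hasDerivAt {f f' : ℝ → ℝ} {a b μ : ℝ}
    (hf : ∀ ξ ∈ Icc a b, HasDerivAt f (f' ξ) ξ) (hμ : ∀ ξ ∈ Icc a b, μ ≤ f' ξ)
    {x y : ℝ} (hx : x ∈ Icc a b) (hy : y ∈ Icc a b) (hxy : x ≤ y) :
    μ * (y - x) ≤ f y - f x := by
  refine (convex_Icc a b).mul_sub_le_image_sub_of_le_deriv
    (fun ξ hξ => (hf ξ hξ).continuousAt.continuousWithinAt) (fun ξ hξ => ?_) (fun ξ hξ => ?_)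
    x hx y hy hxy <;> rw [interior_Icc] at hξ
  · exact (hf ξ (Ioo_subset_Icc_self hξ)).differentiableAt.differentiableWithinAt
  · rw [(hf ξ (Ioo_subset_Icc_self hξ)).deriv]
    exact hμ ξ (Ioo_subset_Icc_self hξ)

section OscillatoryIntegral

variable {ψ p q : ℝ → ℝ} {a b : ℝ}

theorem Continuous.intervalIntegrable_exp_I_mul (hψ : Continuous ψ) (a b : ℝ) :
    IntervalIntegrable (fun ξ => Complex.exp (Complex.I * ψ ξ)) volume a b :=
  (by fun_prop : Continuous fun ξ => Complex.exp (Complex.I * ψ ξ)).intervalIntegrable a b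

theorem ContinuousOn.intervalIntegrable_exp_I_mul (hψ : ContinuousOn ψ (Icc a b)) {x y : ℝ}
    (hx : x ∈ Icc a b) (hy : y ∈ Icc a b) :
    IntervalIntegrable (fun ξ => Complex.exp (Complex.I * ψ ξ)) volume x y :=
  ((by fun_prop : ContinuousOn (fun ξ => Complex.exp (Complex.I * ψ ξ)) (Icc a b)).mono
    (uIcc_subset_Icc hx hy)).intervalIntegrable

theorem norm_integral_exp_I_mul_le (hab : a ≤ b) :
    ‖∫ ξ in a..b, Complex.exp (Complex.I * ψ ξ)‖ ≤ b - a := by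
  simpa [abs_of_nonneg (sub_nonneg.2 hab)] using
    intervalIntegral.norm_integral_le_of_norm_le_const (a := a) (b := b) fun ξ _ =>
      (Complex.norm_exp_I_mul_ofReal (ψ ξ)).le

theorem integral_exp_I_mul_eq_by_parts (hab : a ≤ b)
    (hψ : ∀ ξ ∈ Icc a b, HasDerivAt ψ (p ξ) ξ) (hp : ∀ ξ ∈ Icc a b, HasDerivAt p (q ξ) ξ)
    (hqc : ContinuousOn q (Icc a b)) (hp0 : ∀ ξ ∈ Icc a b, p ξ ≠ 0) :
    ∫ ξ in a..b, Complex.exp (Complex.I * ψ ξ) =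
      Complex.exp (Complex.I * ψ b) / (Complex.I * p b) -
        Complex.exp (Complex.I * ψ a) / (Complex.I * p a) +
          ∫ ξ in a..b, Complex.exp (Complex.I * ψ ξ) * q ξ / (Complex.I * p ξ ^ 2) := by
  have hpc : ContinuousOn p (Icc a b) := fun ξ hξ => (hp ξ hξ).continuousAt.continuousWithinAt
  have hψc : ContinuousOn ψ (Icc a b) := fun ξ hξ => (hψ ξ hξ).continuousAt.continuousWithinAt
  rw [← uIcc_of_le hab] at hψ hp hqc hpc hψc hp0
  have hp0' (ξ : ℝ) (hξ : ξ ∈ uIcc a b) : (p ξ : ℂ) ≠ 0 := Complex.ofReal_ne_zero.2 (hp0 ξ hξ)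
  have hIp (ξ : ℝ) (hξ : ξ ∈ uIcc a b) : Complex.I * p ξ ≠ 0 :=
    mul_ne_zero Complex.I_ne_zero (hp0' ξ hξ)
  have hv : ∀ ξ ∈ uIcc a b, HasDerivAt (fun η => Complex.exp (Complex.I * ψ η))
      (Complex.exp (Complex.I * ψ ξ) * (Complex.I * p ξ)) ξ := fun ξ hξ =>
    ((hψ ξ hξ).ofReal_comp.const_mul Complex.I).cexp
  have hu : ∀ ξ ∈ uIcc a b, HasDerivAt (fun η => (Complex.I * p η)⁻¹)
      (-(Complex.I * q ξ) / (Complex.I * p ξ) ^ 2) ξ := fun ξ hξ =>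
    ((hp ξ hξ).ofReal_comp.const_mul Complex.I).inv (hIp ξ hξ)
  have hibp := intervalIntegral.integral_mul_deriv_eq_deriv_mul hu hv
    (ContinuousOn.intervalIntegrable (ContinuousOn.div (by fun_prop) (by fun_prop)
      fun ξ hξ => pow_ne_zero 2 (hIp ξ hξ)))
    (ContinuousOn.intervalIntegrable (by fun_prop))
  rw [intervalIntegral.integral_congr (g := fun ξ => (Complex.I * p ξ)⁻¹ *
    (Complex.exp (Complex.I * ψ ξ) * (Complex.I * p ξ))) fun ξ hξ => by field_simp [hp0' ξ hξ],
    hibp, sub_eq_add_neg (_ - _), ← intervalIntegral.integral_neg]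
  congr 1
  · ring
  · refine intervalIntegral.integral_congr fun ξ hξ => ?_
    have := hp0' ξ hξ
    field_simp

theorem le_abs_of_monotoneOn {m ξ : ℝ} (hmono : MonotoneOn p (Icc a b))
    (hsign : m ≤ p a ∨ p b ≤ -m) (hξ : ξ ∈ Icc a b) : m ≤ |p ξ| := by
  rcases hsign with h | h
  · exact (h.trans (hmono ⟨le_rfl, hξ.1.trans hξ.2⟩ hξ hξ.1)).trans (le_abs_self _)
  · exact le_abs.2 (Or.inr (le_neg.1 ((hmono hξ ⟨hξ.1.trans hξ.2, le_rfl⟩ hξ.2).trans h)))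

theorem inv_sub_inv_le_of_monotoneOn {m : ℝ} (hab : a ≤ b) (hm : 0 < m)
    (hmono : MonotoneOn p (Icc a b)) (hsign : m ≤ p a ∨ p b ≤ -m) :
    (p a)⁻¹ - (p b)⁻¹ ≤ m⁻¹ := by
  have hpab := hmono (left_mem_Icc.2 hab) (right_mem_Icc.2 hab) hab
  rcases hsign with h | h
  · have h1 := inv_anti₀ hm h
    have h2 := inv_pos.2 (hm.trans_le (h.trans hpab))
    linarith
  · have h1 := inv_anti₀ hm (le_neg.1 h)
    have h2 := inv_lt_zero.2 ((hpab.trans h).trans_lt (neg_lt_zero.2 hm))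
    rw [inv_neg] at h1
    linarith

theorem norm_integral_exp_I_mul_le_of_monotone_deriv {m : ℝ} (hab : a ≤ b) (hm : 0 < m)
    (hψ : ∀ ξ ∈ Icc a b, HasDerivAt ψ (p ξ) ξ) (hp : ∀ ξ ∈ Icc a b, HasDerivAt p (q ξ) ξ)
    (hqc : ContinuousOn q (Icc a b)) (hq : ∀ ξ ∈ Icc a b, 0 ≤ q ξ)
    (hsign : m ≤ p a ∨ p b ≤ -m) :
    ‖∫ ξ in a..b, Complex.exp (Complex.I * ψ ξ)‖ ≤ 3 / m := by
  have hmono : MonotoneOn p (Icc a b) := fun x hx y hy hxy => by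
    simpa using mul_sub_le_sub_of_le_hasDerivAt hp hq hx hy hxy
  have hpabs (ξ : ℝ) (hξ : ξ ∈ Icc a b) := le_abs_of_monotoneOn hmono hsign hξ
  have hp0 (ξ : ℝ) (hξ : ξ ∈ Icc a b) : p ξ ≠ 0 := abs_pos.1 (hm.trans_le (hpabs ξ hξ))
  have hbdry (ξ : ℝ) (hξ : ξ ∈ Icc a b) :
      ‖Complex.exp (Complex.I * ψ ξ) / (Complex.I * p ξ)‖ ≤ m⁻¹ := by
    simpa using inv_anti₀ hm (hpabs ξ hξ)
  have hrem : ‖∫ ξ in a..b, Complex.exp (Complex.I * ψ ξ) * q ξ / (Complex.I * p ξ ^ 2)‖ ≤ m⁻¹ := by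
    have hpc : ContinuousOn p (Icc a b) := fun ξ hξ => (hp ξ hξ).continuousAt.continuousWithinAt
    have hderiv (ξ : ℝ) (hξ : ξ ∈ uIcc a b) : HasDerivAt (-p⁻¹) (q ξ / p ξ ^ 2) ξ := by
      rw [uIcc_of_le hab] at hξ
      simpa [neg_div] using ((hp ξ hξ).inv (hp0 ξ hξ)).neg
    have hint : IntervalIntegrable (fun ξ => q ξ / p ξ ^ 2) volume a b :=
      ContinuousOn.intervalIntegrable (by
        rw [uIcc_of_le hab]
        exact hqc.div (hpc.pow 2) fun ξ hξ => pow_ne_zero 2 (hp0 ξ hξ))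
    calc _ ≤ ∫ ξ in a..b, q ξ / p ξ ^ 2 := by
          refine intervalIntegral.norm_integral_le_of_norm_le hab
            (Eventually.of_forall fun ξ hξ => le_of_eq ?_) hint
          simp [abs_of_nonneg (hq ξ (Ioc_subset_Icc_self hξ))]
      _ = (p a)⁻¹ - (p b)⁻¹ := by
          rw [intervalIntegral.integral_eq_sub_of_hasDerivAt hderiv hint]
          simp only [Pi.neg_apply, Pi.inv_apply]
          ring
      _ ≤ m⁻¹ := inv_sub_inv_le_of_monotoneOn hab hm hmono hsign
  rw [integral_exp_I_mul_eq_by_parts hab hψ hp hqc hp0]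
  calc _ ≤ m⁻¹ + m⁻¹ + m⁻¹ :=
        (norm_add_le _ _).trans (add_le_add ((norm_sub_le _ _).trans (add_le_add
          (hbdry b (right_mem_Icc.2 hab)) (hbdry a (left_mem_Icc.2 hab)))) hrem)
    _ = 3 / m := by ring

theorem exists_mem_Icc_crossing (hab : a ≤ b) (hpc : ContinuousOn p (Icc a b)) (y : ℝ) :
    ∃ c ∈ Icc a b, (a < c → p c ≤ y) ∧ (c < b → y ≤ p c) := by
  by_cases ha : y ≤ p a
  · exact ⟨a, left_mem_Icc.2 hab, fun h => absurd h (lt_irrefl a), fun _ => ha⟩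
  by_cases hb : p b ≤ y
  · exact ⟨b, right_mem_Icc.2 hab, fun _ => hb, fun h => absurd h (lt_irrefl b)⟩
  obtain ⟨c, hc, hpc⟩ := intermediate_value_Icc hab hpc ⟨(not_le.1 ha).le, (not_le.1 hb).le⟩
  exact ⟨c, hc, fun _ => hpc.le, fun _ => hpc.ge⟩

/-- Split `[a, b]` into the parts where `ψ' ≤ -√μ` and `ψ' ≥ √μ`, handled by the first-derivative
test, and the part in between, of length at most `2 / √μ` since `ψ'' ≥ μ`. -/
theorem norm_integral_exp_I_mul_le_of_le_deriv2 {μ : ℝ} (hab : a ≤ b) (hμ : 0 < μ)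
    (hψ : ∀ ξ ∈ Icc a b, HasDerivAt ψ (p ξ) ξ) (hp : ∀ ξ ∈ Icc a b, HasDerivAt p (q ξ) ξ)
    (hqc : ContinuousOn q (Icc a b)) (hqμ : ∀ ξ ∈ Icc a b, μ ≤ q ξ) :
    ‖∫ ξ in a..b, Complex.exp (Complex.I * ψ ξ)‖ ≤ 8 / √μ := by
  set δ := √μ
  have hδ : 0 < δ := Real.sqrt_pos.2 hμ
  have hδμ : δ ^ 2 = μ := Real.sq_sqrt hμ.le
  have hpc : ContinuousOn p (Icc a b) := fun ξ hξ => (hp ξ hξ).continuousAt.continuousWithinAt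
  obtain ⟨c, hc, hpc_le, hpc_ge⟩ := exists_mem_Icc_crossing hab hpc (-δ)
  obtain ⟨d, hd, hpd_le, hpd_ge⟩ :=
    exists_mem_Icc_crossing hc.2 (hpc.mono (Icc_subset_Icc_left hc.1)) δ
  have hd' : d ∈ Icc a b := ⟨hc.1.trans hd.1, hd.2⟩
  have hsub {x y : ℝ} (hx : x ∈ Icc a b) (hy : y ∈ Icc a b) : Icc x y ⊆ Icc a b :=
    Icc_subset_Icc hx.1 hy.2
  have hfirst {x y : ℝ} (hx : x ∈ Icc a b) (hy : y ∈ Icc a b) (hxy : x < y)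
      (hsign : δ ≤ p x ∨ p y ≤ -δ) :
      ‖∫ ξ in x..y, Complex.exp (Complex.I * ψ ξ)‖ ≤ 3 / δ :=
    norm_integral_exp_I_mul_le_of_monotone_deriv hxy.le hδ (fun ξ hξ => hψ ξ (hsub hx hy hξ))
      (fun ξ hξ => hp ξ (hsub hx hy hξ)) (hqc.mono (hsub hx hy))
      (fun ξ hξ => hμ.le.trans (hqμ ξ (hsub hx hy hξ))) hsign
  have h₁ : ‖∫ ξ in a..c, Complex.exp (Complex.I * ψ ξ)‖ ≤ 3 / δ := by
    rcases hc.1.eq_or_lt with h | h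
    · rw [← h, intervalIntegral.integral_same, norm_zero]; positivity
    · exact hfirst (left_mem_Icc.2 hab) hc h (Or.inr (hpc_le h))
  have h₃ : ‖∫ ξ in d..b, Complex.exp (Complex.I * ψ ξ)‖ ≤ 3 / δ := by
    rcases hd.2.eq_or_lt with h | h
    · rw [h, intervalIntegral.integral_same, norm_zero]; positivity
    · exact hfirst hd' (right_mem_Icc.2 hab) h (Or.inl (hpd_ge h))
  have h₂ : ‖∫ ξ in c..d, Complex.exp (Complex.I * ψ ξ)‖ ≤ 2 / δ := by
    rcases hd.1.eq_or_lt with h | h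
    · rw [← h, intervalIntegral.integral_same, norm_zero]; positivity
    have hgap : μ * (d - c) ≤ 2 * δ := by
      linarith [mul_sub_le_sub_of_le_hasDerivAt hp hqμ hc hd' hd.1, hpd_le h,
        hpc_ge (h.trans_le hd.2)]
    refine (norm_integral_exp_I_mul_le hd.1).trans ?_
    rw [le_div_iff₀ hδ]
    nlinarith
  have hψc : ContinuousOn ψ (Icc a b) := fun ξ hξ => (hψ ξ hξ).continuousAt.continuousWithinAt
  have ha := left_mem_Icc.2 hab
  have hb := right_mem_Icc.2 hab
  rw [← intervalIntegral.integral_add_adjacent_intervals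
      (hψc.intervalIntegrable_exp_I_mul ha hd') (hψc.intervalIntegrable_exp_I_mul hd' hb),
    ← intervalIntegral.integral_add_adjacent_intervals
      (hψc.intervalIntegrable_exp_I_mul ha hc) (hψc.intervalIntegrable_exp_I_mul hc hd')]
  calc _ ≤ 3 / δ + 2 / δ + 3 / δ := (norm_add₃_le).trans (by gcongr)
    _ = 8 / δ := by ring

theorem exists_tendsto_integral_exp_I_mul_of_tendsto_deriv {A : ℝ} (a : ℝ)
    (hψ : ∀ ξ, HasDerivAt ψ (p ξ) ξ) (hp : ∀ ξ ∈ Ici A, HasDerivAt p (q ξ) ξ)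
    (hqc : ContinuousOn q (Ici A)) (hq : ∀ ξ ∈ Ici A, 0 ≤ q ξ) (hp_top : Tendsto p atTop atTop) :
    ∃ L, Tendsto (fun R => ∫ ξ in a..R, Complex.exp (Complex.I * ψ ξ)) atTop (nhds L) := by
  have hψc : Continuous ψ := continuous_iff_continuousAt.2 fun ξ => (hψ ξ).continuousAt
  have hint := hψc.intervalIntegrable_exp_I_mul
  refine cauchySeq_tendsto_of_complete (Metric.cauchySeq_iff'.2 fun ε hε => ?_)
  obtain ⟨N, hNA, hpN⟩ : ∃ N, A ≤ N ∧ 3 / ε < p N :=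
    ((eventually_ge_atTop A).and (hp_top.eventually_gt_atTop (3 / ε))).exists
  have hpN0 : 0 < p N := (by positivity : (0 : ℝ) < 3 / ε).trans hpN
  refine ⟨N, fun n hn => ?_⟩
  have hsub : Icc N n ⊆ Ici A := fun ξ hξ => hNA.trans hξ.1
  rw [dist_eq_norm, intervalIntegral.integral_interval_sub_left (hint a n) (hint a N)]
  calc ‖∫ ξ in N..n, Complex.exp (Complex.I * ψ ξ)‖ ≤ 3 / p N :=
        norm_integral_exp_I_mul_le_of_monotone_deriv hn hpN0 (fun ξ _ => hψ ξ)
          (fun ξ hξ => hp ξ (hsub hξ)) (hqc.mono hsub) (fun ξ hξ => hq ξ (hsub hξ))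
          (Or.inl le_rfl)
    _ < ε := (div_lt_iff₀ hpN0).2 ((div_lt_iff₀' hε).1 hpN)

theorem integral_exp_I_mul_neg_self_of_odd (hψc : Continuous ψ) (hodd : Function.Odd ψ)
    (R : ℝ) :
    ∫ ξ in (-R)..R, Complex.exp (Complex.I * ψ ξ) =
      conj (∫ ξ in 0..R, Complex.exp (Complex.I * ψ ξ)) +
        ∫ ξ in 0..R, Complex.exp (Complex.I * ψ ξ) := by
  have hint := hψc.intervalIntegrable_exp_I_mul
  rw [← intervalIntegral.integral_add_adjacent_intervals (hint (-R) 0) (hint 0 R),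
    ← intervalIntegral.intervalIntegral_conj]
  congr 1
  have hconj (ξ : ℝ) :
      conj (Complex.exp (Complex.I * ψ ξ)) = Complex.exp (Complex.I * ψ (-ξ)) := by
    rw [← Complex.exp_conj, hodd, map_mul, Complex.conj_I, Complex.conj_ofReal]
    push_cast
    ring_nf
  simp_rw [hconj]
  rw [intervalIntegral.integral_comp_neg (fun ξ => Complex.exp (Complex.I * ψ ξ)), neg_zero]

end OscillatoryIntegral

namespace Boussinesq

noncomputable def phase (x t ξ : ℝ) : ℝ := x * ξ + t * ξ * √(1 + ξ ^ 2)

noncomputable def phaseDeriv (x t ξ : ℝ) : ℝ := x + t * (1 + 2 * ξ ^ 2) / √(1 + ξ ^ 2)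

noncomputable def phaseDeriv2 (t ξ : ℝ) : ℝ :=
  t * ξ * (3 + 2 * ξ ^ 2) / ((1 + ξ ^ 2) * √(1 + ξ ^ 2))

variable {x t : ℝ}

theorem continuous_phase (x t : ℝ) : Continuous (phase x t) := by
  unfold phase
  fun_prop

theorem sqrt_one_add_sq_pos (ξ : ℝ) : 0 < √(1 + ξ ^ 2) := Real.sqrt_pos.2 (by positivity)

theorem hasDerivAt_sqrt_one_add_sq (ξ : ℝ) :
    HasDerivAt (fun u => √(1 + u ^ 2)) (ξ / √(1 + ξ ^ 2)) ξ := by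
  convert ((hasDerivAt_pow 2 ξ).const_add 1).sqrt (by positivity) using 1
  field_simp
  ring

theorem hasDerivAt_phase (x t ξ : ℝ) : HasDerivAt (phase x t) (phaseDeriv x t ξ) ξ := by
  have hs := Real.sq_sqrt (by positivity : (0 : ℝ) ≤ 1 + ξ ^ 2)
  have hs0 := (sqrt_one_add_sq_pos ξ).ne'
  refine (((hasDerivAt_id' ξ).const_mul x).add
    (((hasDerivAt_id' ξ).const_mul t).mul (hasDerivAt_sqrt_one_add_sq ξ))).congr_deriv ?_
  simp only [phaseDeriv]
  field_simp
  linear_combination t * hs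

theorem hasDerivAt_phaseDeriv (x t ξ : ℝ) : HasDerivAt (phaseDeriv x t) (phaseDeriv2 t ξ) ξ := by
  have hs := Real.sq_sqrt (by positivity : (0 : ℝ) ≤ 1 + ξ ^ 2)
  have hs0 := (sqrt_one_add_sq_pos ξ).ne'
  refine ((((hasDerivAt_pow 2 ξ).const_mul 2).const_add 1).const_mul t |>.div
    (hasDerivAt_sqrt_one_add_sq ξ) hs0).const_add x |>.congr_deriv ?_
  simp only [phaseDeriv2]
  field_simp
  linear_combination (t * ξ * (1 + 2 * ξ ^ 2)) * hs

theorem continuous_phaseDeriv2 : Continuous (phaseDeriv2 t) :=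
  Continuous.div (by fun_prop) (by fun_prop) fun ξ =>
    mul_ne_zero (by positivity) (sqrt_one_add_sq_pos ξ).ne'

theorem phaseDeriv2_nonneg (ht : 0 ≤ t) {ξ : ℝ} (hξ : 0 ≤ ξ) : 0 ≤ phaseDeriv2 t ξ := by
  have := sqrt_one_add_sq_pos ξ
  unfold phaseDeriv2
  positivity

theorem le_phaseDeriv2 (ht : 0 ≤ t) {ξ : ℝ} (hξ : 1 ≤ ξ) : t ≤ phaseDeriv2 t ξ := by
  have hs := Real.sq_sqrt (by positivity : (0 : ℝ) ≤ 1 + ξ ^ 2)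
  have hs0 := sqrt_one_add_sq_pos ξ
  have hs2 : √(1 + ξ ^ 2) ≤ 2 * ξ := by nlinarith
  rw [phaseDeriv2, le_div_iff₀ (by positivity)]
  nlinarith [mul_le_mul_of_nonneg_left hs2 (by positivity : (0 : ℝ) ≤ t * (1 + ξ ^ 2))]

theorem phase_odd : Function.Odd (phase x t) := fun ξ => by
  simp only [phase, neg_sq]
  ring

theorem tendsto_phaseDeriv_atTop (ht : 0 < t) : Tendsto (phaseDeriv x t) atTop atTop := by
  refine tendsto_atTop_mono' _ ((eventually_ge_atTop 1).mono fun ξ hξ => ?_)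
    (tendsto_atTop_add_const_left _ (phaseDeriv x t 1)
      ((tendsto_atTop_add_const_right _ (-1) tendsto_id).const_mul_atTop ht))
  have := mul_sub_le_sub_of_le_hasDerivAt (fun η _ => hasDerivAt_phaseDeriv x t η)
    (fun η hη => le_phaseDeriv2 ht.le hη.1) (left_mem_Icc.2 hξ) (right_mem_Icc.2 hξ) hξ
  simp only [id]
  linarith

theorem norm_integral_exp_I_mul_phase_le (ht : 0 < t) (ht1 : t ≤ 1) {R : ℝ} (hR : 1 ≤ R) :
    ‖∫ ξ in 0..R, Complex.exp (Complex.I * phase x t ξ)‖ ≤ 9 / √t := by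
  have hint := (continuous_phase x t).intervalIntegrable_exp_I_mul
  have h₀₁ : ‖∫ ξ in 0..1, Complex.exp (Complex.I * phase x t ξ)‖ ≤ 1 := by
    simpa using norm_integral_exp_I_mul_le (ψ := phase x t) zero_le_one
  have h₁R := norm_integral_exp_I_mul_le_of_le_deriv2 hR ht (fun ξ _ => hasDerivAt_phase x t ξ)
    (fun ξ _ => hasDerivAt_phaseDeriv x t ξ) continuous_phaseDeriv2.continuousOn
    (fun ξ hξ => le_phaseDeriv2 ht.le hξ.1)
  have hst : √t ≤ 1 := Real.sqrt_le_one.2 ht1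
  rw [← intervalIntegral.integral_add_adjacent_intervals (hint 0 1) (hint 1 R)]
  calc _ ≤ 1 + 8 / √t := (norm_add_le _ _).trans (add_le_add h₀₁ h₁R)
    _ ≤ 9 / √t := by
      rw [le_div_iff₀ (Real.sqrt_pos.2 ht), add_mul, div_mul_cancel₀ _ (Real.sqrt_pos.2 ht).ne']
      linarith

end Boussinesq

open Boussinesq in
theorem oscillatory_integral_boussinesq_small_time :
    ∃ C : ℝ, 0 < C ∧ ∀ x t : ℝ, 0 < t → t ≤ 1 →
      ∃ L : ℂ,
        Tendsto
          (fun R : ℝ => ∫ ξ in (-R)..R,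
            Complex.exp (Complex.I * ((x : ℂ) * (ξ : ℂ) +
              (t : ℂ) * (ξ : ℂ) * (Real.sqrt (1 + ξ ^ 2) : ℂ))))
          atTop (nhds L) ∧
        ‖L‖ ≤ C * t ^ (-(1 : ℝ) / 2) := by
  refine ⟨18, by norm_num, fun x t ht ht1 => ?_⟩
  obtain ⟨L, hL⟩ := exists_tendsto_integral_exp_I_mul_of_tendsto_deriv (A := 0) 0
    (hasDerivAt_phase x t) (fun ξ _ => hasDerivAt_phaseDeriv x t ξ)
    continuous_phaseDeriv2.continuousOn (fun ξ hξ => phaseDeriv2_nonneg ht.le hξ)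
    (tendsto_phaseDeriv_atTop ht)
  have hLle : ‖L‖ ≤ 9 / √t := le_of_tendsto hL.norm <|
    (eventually_ge_atTop 1).mono fun R hR => norm_integral_exp_I_mul_phase_le ht ht1 hR
  have hintegrand (ξ : ℝ) : Complex.exp (Complex.I * ((x : ℂ) * (ξ : ℂ) +
      (t : ℂ) * (ξ : ℂ) * (Real.sqrt (1 + ξ ^ 2) : ℂ))) =
      Complex.exp (Complex.I * phase x t ξ) := by
    simp only [phase]
    push_cast
    ring_nf
  refine ⟨conj L + L, ?_, ?_⟩
  · simp_rw [hintegrand, integral_exp_I_mul_neg_self_of_odd (continuous_phase x t) phase_odd]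
    exact ((Complex.continuous_conj.tendsto L).comp hL).add hL
  · rw [show (-(1 : ℝ) / 2) = -(1 / 2) by ring, Real.rpow_neg ht.le, ← Real.sqrt_eq_rpow]
    calc ‖conj L + L‖ ≤ ‖L‖ + ‖L‖ := (norm_add_le _ _).trans_eq (by rw [Complex.norm_conj])
      _ ≤ 18 * (√t)⁻¹ := by linarith [hLle, div_eq_mul_inv 9 √t]
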